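/- Let S be a Boolean inverse ∧-monoid. Then S is piecewise factorizable if, and only if, every ultrafilter of S contains a unit. -/

import Mathlib

universe u

/-- An inverse monoid with zero: every element `a` has a unique generalized
inverse `a⁻¹`, and `0` is an absorbing element. -/
class InverseMonoidWithZero (S : Type u) extends Monoid S, Zero S, Inv S where
  zero_mul' : ∀ a : S, 0 * a = 0
  mul_zero' : ∀ a : S, a * 0 = 0
  mul_inv_mul : ∀ a : S, a * a⁻¹ * a = a
  inv_mul_inv : ∀ a : S, a⁻¹ * a * a⁻¹ = a⁻¹
  inv_unique : ∀ a b : S, a * b * a = a → b * a * b = b → b = a⁻¹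

section BasicDefs

variable {S : Type u}

/-- The natural partial order: `a ≤ b` iff `a = e * b` for some idempotent `e`. -/
def nle [InverseMonoidWithZero S] (a b : S) : Prop :=
  ∃ e : S, e * e = e ∧ a = e * b

/-- `a` and `b` are compatible if `a * b⁻¹` and `a⁻¹ * b` are idempotents. -/
def Compat [InverseMonoidWithZero S] (a b : S) : Prop :=
  (a * b⁻¹) * (a * b⁻¹) = a * b⁻¹ ∧ (a⁻¹ * b) * (a⁻¹ * b) = a⁻¹ * b

/-- `a` and `b` are orthogonal if `a * b⁻¹ = 0` and `a⁻¹ * b = 0`. -/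
def Orth [InverseMonoidWithZero S] (a b : S) : Prop :=
  a * b⁻¹ = 0 ∧ a⁻¹ * b = 0

end BasicDefs

/-- A distributive inverse monoid: every compatible pair has a join (for the
natural partial order), recorded by `sup`, and multiplication distributes over
these binary joins. -/
class DistributiveInverseMonoid (S : Type u) extends InverseMonoidWithZero S where
  sup : S → S → S
  le_sup_left : ∀ a b : S, Compat a b → nle a (sup a b)
  le_sup_right : ∀ a b : S, Compat a b → nle b (sup a b)
  sup_le : ∀ a b c : S, Compat a b → nle a c → nle b c → nle (sup a b) c
  mul_sup : ∀ a b c : S, Compat a b → c * sup a b = sup (c * a) (c * b)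
  sup_mul : ∀ a b c : S, Compat a b → sup a b * c = sup (a * c) (b * c)

/-- A Boolean inverse monoid: a distributive inverse monoid whose idempotents
form a Boolean algebra under the natural partial order; `compl` records the
complementation on idempotents. -/
class BooleanInverseMonoid (S : Type u) extends DistributiveInverseMonoid S where
  compl : S → S
  compl_idem : ∀ e : S, e * e = e → compl e * compl e = compl e
  mul_compl : ∀ e : S, e * e = e → e * compl e = 0
  sup_compl : ∀ e : S, e * e = e → sup e (compl e) = 1

/-- A Boolean inverse ∧-monoid: a Boolean inverse monoid in which every pair of
elements has a meet with respect to the natural partial order. -/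
class BooleanInverseMeetMonoid (S : Type u) extends BooleanInverseMonoid S where
  inf : S → S → S
  inf_le_left : ∀ a b : S, nle (inf a b) a
  inf_le_right : ∀ a b : S, nle (inf a b) b
  le_inf : ∀ a b c : S, nle c a → nle c b → nle c (inf a b)

section MoreDefs

variable {S : Type u}

/-- The join of a compatible pair. -/
def bsup [DistributiveInverseMonoid S] (a b : S) : S := DistributiveInverseMonoid.sup a b

/-- Complementation in the Boolean algebra of idempotents. -/
def bcompl [BooleanInverseMonoid S] (e : S) : S := BooleanInverseMonoid.compl e

/-- The binary meet. -/
def binf [BooleanInverseMeetMonoid S] (a b : S) : S := BooleanInverseMeetMonoid.inf a b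

/-- The fixed-point operator `φ(s) = s ∧ 1`. -/
def phi [BooleanInverseMeetMonoid S] (s : S) : S := binf s 1

/-- The support operator `σ(s) = \overline{φ(s)} ⋅ s⁻¹ s`. -/
def sigma [BooleanInverseMeetMonoid S] (s : S) : S := bcompl (phi s) * (s⁻¹ * s)

/-- An infinitesimal is a non-zero element that squares to zero. -/
def Infinitesimal [InverseMonoidWithZero S] (a : S) : Prop := a ≠ 0 ∧ a * a = 0

/-- A (two-sided) ideal. -/
def IsMIdeal [InverseMonoidWithZero S] (I : Set S) : Prop :=
  I.Nonempty ∧ ∀ a ∈ I, ∀ s : S, s * a ∈ I ∧ a * s ∈ I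

/-- A ∨-ideal: an ideal closed under joins of compatible pairs. -/
def IsVIdeal [DistributiveInverseMonoid S] (I : Set S) : Prop :=
  IsMIdeal I ∧ ∀ a ∈ I, ∀ b ∈ I, Compat a b → bsup a b ∈ I

end MoreDefs

/-- 0-simplifying: the only ∨-ideals are `{0}` and `S`. -/
def ZeroSimplifying (S : Type u) [DistributiveInverseMonoid S] : Prop :=
  ∀ I : Set S, IsVIdeal I → I = {0} ∨ I = Set.univ

/-- 0-simple: non-trivial and the only ideals are `{0}` and `S`. -/
def ZeroSimple (S : Type u) [InverseMonoidWithZero S] : Prop :=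
  (∃ s : S, s ≠ 0) ∧ ∀ I : Set S, IsMIdeal I → I = {0} ∨ I = Set.univ

/-- Fundamental: every element commuting with all idempotents is an idempotent. -/
def Fundamental (S : Type u) [InverseMonoidWithZero S] : Prop :=
  ∀ a : S, (∀ e : S, e * e = e → a * e = e * a) → a * a = a

/-- The Boolean algebra of idempotents is atomless. -/
def IdemAtomless (S : Type u) [InverseMonoidWithZero S] : Prop :=
  ∀ e : S, e * e = e → e ≠ 0 → ∃ f : S, f * f = f ∧ f ≠ 0 ∧ nle f e ∧ f ≠ e

section Filters

variable {S : Type u}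

/-- A filter in a Boolean inverse ∧-monoid: a nonempty subset closed under
binary meets and upward closed in the natural partial order. -/
def IsMFilter [BooleanInverseMeetMonoid S] (A : Set S) : Prop :=
  A.Nonempty ∧ (∀ a ∈ A, ∀ b ∈ A, binf a b ∈ A) ∧ ∀ a ∈ A, ∀ b : S, nle a b → b ∈ A

/-- An ultrafilter: a maximal proper filter. -/
def IsMUltrafilter [BooleanInverseMeetMonoid S] (A : Set S) : Prop :=
  IsMFilter A ∧ (0 : S) ∉ A ∧ ∀ B : Set S, IsMFilter B → (0 : S) ∉ B → A ⊆ B → A = B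

/-- A filter of the Boolean algebra of idempotents (meet of idempotents is
their product). -/
def IsIdemFilter [InverseMonoidWithZero S] (F : Set S) : Prop :=
  F.Nonempty ∧ (∀ e ∈ F, e * e = e) ∧ (∀ e ∈ F, ∀ f ∈ F, e * f ∈ F) ∧
    ∀ e ∈ F, ∀ f : S, f * f = f → nle e f → f ∈ F

/-- An ultrafilter of the Boolean algebra of idempotents. -/
def IsIdemUltrafilter [InverseMonoidWithZero S] (F : Set S) : Prop :=
  IsIdemFilter F ∧ (0 : S) ∉ F ∧
    ∀ G : Set S, IsIdemFilter G → (0 : S) ∉ G → F ⊆ G → F = G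

end Filters

section PencilDefs

variable {S : Type u}

/-- `Preceq e f`: there is a pencil from `e` to `f`, i.e. finitely many
elements `x₁, …, xₘ` with `r(xᵢ) ≤ f` for all `i` and `e = ⋁ d(xᵢ)`
(a least upper bound for the natural partial order). -/
def Preceq [DistributiveInverseMonoid S] (e f : S) : Prop :=
  ∃ l : List S, l ≠ [] ∧ (∀ x ∈ l, nle (x * x⁻¹) f) ∧
    (∀ x ∈ l, nle (x⁻¹ * x) e) ∧ ∀ c : S, (∀ x ∈ l, nle (x⁻¹ * x) c) → nle e c

/-- Piecewise factorizable: every element is a finite join of elements each of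
which lies beneath a unit. -/
def PiecewiseFactorizable (S : Type u) [DistributiveInverseMonoid S] : Prop :=
  ∀ s : S, ∃ l : List S, l ≠ [] ∧ (∀ x ∈ l, ∃ g : S, IsUnit g ∧ nle x g) ∧
    (∀ x ∈ l, nle x s) ∧ ∀ c : S, (∀ x ∈ l, nle x c) → nle s c

/-- A properly infinite idempotent. -/
def ProperlyInfinite [DistributiveInverseMonoid S] (e : S) : Prop :=
  ∃ x y : S, x⁻¹ * x = e ∧ y⁻¹ * y = e ∧ Orth (x * x⁻¹) (y * y⁻¹) ∧
    nle (bsup (x * x⁻¹) (y * y⁻¹)) e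

end PencilDefs

/-- Purely infinite: every non-zero idempotent is properly infinite. -/
def PurelyInfinite (S : Type u) [DistributiveInverseMonoid S] : Prop :=
  ∀ e : S, e * e = e → e ≠ 0 → ProperlyInfinite e

/-!
Ultrafilters are prime: if the join of a compatible pair lies in an ultrafilter `A`, then so
does one of the two elements, for otherwise some `t ∈ A` below the join meets both in `0`, and
`t = t t⁻¹ a ∨ t t⁻¹ b = 0`. So if `s ∈ A` is a finite join of elements each beneath a unit, `A`
contains one of them and hence a unit.

Conversely, fix `s` and let `J` be the idempotents `e` such that `s e` lies beneath a unit.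
If `s⁻¹ s` were not below a finite join of elements of `J`, the elements above some `s ē`, with
`e` such a join, would form a proper filter. An ultrafilter `A` containing it contains a unit `g`
and `t = g ∧ s`; then `t = s e` with `e = t⁻¹ t ∈ J`, so `s ē ∈ A`, while `t ∧ s ē = 0`.
Hence `s⁻¹ s ≤ e₁ ∨ ⋯ ∨ eₙ` with `eᵢ ∈ J`, and `s = s e₁ ∨ ⋯ ∨ s eₙ`.
-/

namespace InverseMonoidWithZero

variable {S : Type u}

section InverseMonoid

variable [InverseMonoidWithZero S]

theorem isIdempotentElem_mul_inv (a : S) : IsIdempotentElem (a * a⁻¹) := by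
  rw [IsIdempotentElem, ← mul_assoc, mul_inv_mul]

theorem isIdempotentElem_inv_mul (a : S) : IsIdempotentElem (a⁻¹ * a) := by
  rw [IsIdempotentElem, ← mul_assoc, inv_mul_inv]

theorem isIdempotentElem_zero : IsIdempotentElem (0 : S) := zero_mul' 0

theorem mul_inv_mul_assoc (a : S) : a * (a⁻¹ * a) = a := by
  rw [← mul_assoc, mul_inv_mul]

theorem inv_inv (a : S) : a⁻¹⁻¹ = a :=
  (inv_unique a⁻¹ a (inv_mul_inv a) (mul_inv_mul a)).symm

theorem inv_eq_self {e : S} (he : IsIdempotentElem e) : e⁻¹ = e :=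
  (inv_unique e e (by rw [he.eq, he.eq]) (by rw [he.eq, he.eq])).symm

-- The inverse `x` of `e f` satisfies `f x e = x` by uniqueness of inverses, which makes `x`
-- idempotent, and then `e f = x⁻¹ = x`.
theorem isIdempotentElem_mul {e f : S} (he : IsIdempotentElem e) (hf : IsIdempotentElem f) :
    IsIdempotentElem (e * f) := by
  have hx : (e * f)⁻¹ * (e * f) * (e * f)⁻¹ = (e * f)⁻¹ := inv_mul_inv (e * f)
  have hy : f * (e * f)⁻¹ * e = (e * f)⁻¹ := by
    refine inv_unique (e * f) _ ?_ ?_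
    · calc e * f * (f * (e * f)⁻¹ * e) * (e * f)
          = e * (f * f) * (e * f)⁻¹ * (e * e) * f := by simp only [mul_assoc]
        _ = e * f := by rw [he.eq, hf.eq, mul_assoc _ e f, mul_inv_mul]
    · calc f * (e * f)⁻¹ * e * (e * f) * (f * (e * f)⁻¹ * e)
          = f * ((e * f)⁻¹ * ((e * e) * (f * f)) * (e * f)⁻¹) * e := by simp only [mul_assoc]
        _ = f * (e * f)⁻¹ * e := by rw [he.eq, hf.eq, hx]
  have hxx : IsIdempotentElem (e * f)⁻¹ := by
    calc (e * f)⁻¹ * (e * f)⁻¹ = f * (e * f)⁻¹ * e * (f * (e * f)⁻¹ * e) := by rw [hy]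
      _ = f * ((e * f)⁻¹ * (e * f) * (e * f)⁻¹) * e := by simp only [mul_assoc]
      _ = (e * f)⁻¹ := by rw [hx, hy]
  rw [← inv_inv (e * f), inv_eq_self hxx]
  exact hxx

theorem commute_of_isIdempotentElem {e f : S} (he : IsIdempotentElem e)
    (hf : IsIdempotentElem f) : Commute e f := by
  have hef := isIdempotentElem_mul he hf
  have hfe := isIdempotentElem_mul hf he
  have h : f * e = (e * f)⁻¹ := by
    refine inv_unique (e * f) (f * e) ?_ ?_
    · calc e * f * (f * e) * (e * f) = e * (f * f) * (e * e) * f := by simp only [mul_assoc]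
        _ = e * f := by rw [he.eq, hf.eq]; simpa only [mul_assoc] using hef.eq
    · calc f * e * (e * f) * (f * e) = f * (e * e) * (f * f) * e := by simp only [mul_assoc]
        _ = f * e := by rw [he.eq, hf.eq]; simpa only [mul_assoc] using hfe.eq
  exact (h.trans (inv_eq_self hef)).symm

theorem mul_inv_rev (a b : S) : (a * b)⁻¹ = b⁻¹ * a⁻¹ := by
  have hc : b * b⁻¹ * (a⁻¹ * a) = a⁻¹ * a * (b * b⁻¹) :=
    commute_of_isIdempotentElem (isIdempotentElem_mul_inv b) (isIdempotentElem_inv_mul a)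
  refine (inv_unique (a * b) (b⁻¹ * a⁻¹) ?_ ?_).symm
  · calc a * b * (b⁻¹ * a⁻¹) * (a * b) = a * (b * b⁻¹ * (a⁻¹ * a)) * b := by
          simp only [mul_assoc]
      _ = a * a⁻¹ * a * (b * b⁻¹ * b) := by rw [hc]; simp only [mul_assoc]
      _ = a * b := by rw [mul_inv_mul, mul_inv_mul]
  · calc b⁻¹ * a⁻¹ * (a * b) * (b⁻¹ * a⁻¹) = b⁻¹ * (a⁻¹ * a * (b * b⁻¹)) * a⁻¹ := by
          simp only [mul_assoc]
      _ = b⁻¹ * b * b⁻¹ * (a⁻¹ * a * a⁻¹) := by rw [← hc]; simp only [mul_assoc]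
      _ = b⁻¹ * a⁻¹ := by rw [inv_mul_inv, inv_mul_inv]

theorem isIdempotentElem_conj {f : S} (hf : IsIdempotentElem f) (b : S) :
    IsIdempotentElem (b * f * b⁻¹) := by
  have hc : f * (b⁻¹ * b) = b⁻¹ * b * f :=
    commute_of_isIdempotentElem hf (isIdempotentElem_inv_mul b)
  calc b * f * b⁻¹ * (b * f * b⁻¹) = b * (f * (b⁻¹ * b)) * f * b⁻¹ := by simp only [mul_assoc]
    _ = b * f * b⁻¹ := by rw [hc, ← mul_assoc, mul_inv_mul_assoc, mul_assoc b f f, hf.eq]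

theorem nle_refl (a : S) : nle a a := ⟨a * a⁻¹, isIdempotentElem_mul_inv a, (mul_inv_mul a).symm⟩

theorem nle_trans {a b c : S} (hab : nle a b) (hbc : nle b c) : nle a c := by
  obtain ⟨f, hf, rfl⟩ := hbc
  obtain ⟨e, he, rfl⟩ := hab
  exact ⟨e * f, isIdempotentElem_mul he hf, (mul_assoc e f c).symm⟩

theorem nle_antisymm {a b : S} (hab : nle a b) (hba : nle b a) : a = b := by
  obtain ⟨e, he, rfl⟩ := hab
  obtain ⟨f, hf, hb⟩ := hba
  have hc : e * f = f * e := commute_of_isIdempotentElem he hf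
  calc e * b = e * (f * (e * b)) := by rw [← hb]
    _ = f * (e * (e * b)) := by rw [← mul_assoc, hc, mul_assoc]
    _ = b := by rw [← mul_assoc e e, he, ← hb]

theorem zero_nle (a : S) : nle 0 a := ⟨0, isIdempotentElem_zero, (zero_mul' a).symm⟩

theorem eq_zero_of_nle_zero {a : S} (h : nle a 0) : a = 0 := by
  obtain ⟨e, -, rfl⟩ := h
  exact mul_zero' e

theorem nle_one_of_isIdempotentElem {e : S} (he : IsIdempotentElem e) : nle e 1 :=
  ⟨e, he, (mul_one e).symm⟩

theorem eq_mul_inv_mul_of_nle {a b : S} (h : nle a b) : a = a * a⁻¹ * b := by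
  obtain ⟨e, he, rfl⟩ := h
  have hc : b * b⁻¹ * e = e * (b * b⁻¹) :=
    commute_of_isIdempotentElem (isIdempotentElem_mul_inv b) he
  rw [mul_inv_rev, inv_eq_self he]
  calc e * b = e * e * (b * b⁻¹ * b) := by rw [he, mul_inv_mul]
    _ = e * (e * (b * b⁻¹)) * b := by simp only [mul_assoc]
    _ = e * b * (b⁻¹ * e) * b := by rw [← hc]; simp only [mul_assoc]

theorem eq_mul_inv_mul_right_of_nle {a b : S} (h : nle a b) : a = b * (a⁻¹ * a) := by
  obtain ⟨e, he, rfl⟩ := h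
  have hc : b * b⁻¹ * e = e * (b * b⁻¹) :=
    commute_of_isIdempotentElem (isIdempotentElem_mul_inv b) he
  rw [mul_inv_rev, inv_eq_self he]
  calc e * b = b * b⁻¹ * e * b := by rw [hc, mul_assoc, mul_inv_mul]
    _ = b * (b⁻¹ * (e * e * b)) := by rw [he]; simp only [mul_assoc]
    _ = b * (b⁻¹ * e * (e * b)) := by simp only [mul_assoc]

theorem eq_mul_of_nle {x b : S} (hx : IsIdempotentElem x) (h : nle x b) : x = x * b := by
  have h' := eq_mul_inv_mul_of_nle h
  rwa [inv_eq_self hx, hx.eq] at h'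

theorem eq_mul_of_nle' {x b : S} (hx : IsIdempotentElem x) (h : nle x b) : x = b * x := by
  have h' := eq_mul_inv_mul_right_of_nle h
  rwa [inv_eq_self hx, hx.eq] at h'

theorem mul_eq_of_nle_mul {c s e : S} (he : IsIdempotentElem e) (h : nle c (s * e)) :
    c * e = c := by
  obtain ⟨f, -, rfl⟩ := h
  simp only [mul_assoc, he.eq]

theorem eq_zero_of_nle_mul_of_nle_mul {c s t e f : S} (he : IsIdempotentElem e)
    (hf : IsIdempotentElem f) (hef : e * f = 0) (hce : nle c (s * e)) (hcf : nle c (t * f)) :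
    c = 0 :=
  calc c = c * e * f := by rw [mul_eq_of_nle_mul he hce, mul_eq_of_nle_mul hf hcf]
    _ = 0 := by rw [mul_assoc, hef, mul_zero']

theorem mul_nle_self {f : S} (hf : IsIdempotentElem f) (b : S) : nle (b * f) b := by
  have hc : f * (b⁻¹ * b) = b⁻¹ * b * f :=
    commute_of_isIdempotentElem hf (isIdempotentElem_inv_mul b)
  refine ⟨b * f * b⁻¹, isIdempotentElem_conj hf b, ?_⟩
  rw [mul_assoc, mul_assoc, hc, ← mul_assoc, mul_inv_mul_assoc]

theorem mul_nle_mul_right {a b : S} (h : nle a b) (c : S) : nle (a * c) (b * c) := by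
  obtain ⟨e, he, rfl⟩ := h
  exact ⟨e, he, mul_assoc e b c⟩

theorem mul_nle_mul_left {a b : S} (h : nle a b) (c : S) : nle (c * a) (c * b) := by
  obtain ⟨e, he, rfl⟩ := h
  rw [← mul_assoc]
  exact mul_nle_mul_right (mul_nle_self he c) b

theorem compat_of_nle {a b s : S} (ha : nle a s) (hb : nle b s) : Compat a b := by
  obtain ⟨e, he, rfl⟩ := ha
  obtain ⟨f, hf, rfl⟩ := hb
  constructor
  · rw [mul_inv_rev, inv_eq_self hf, show e * s * (s⁻¹ * f) = e * (s * s⁻¹) * f by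
      simp only [mul_assoc]]
    exact isIdempotentElem_mul (isIdempotentElem_mul he (isIdempotentElem_mul_inv s)) hf
  · have h := isIdempotentElem_conj (isIdempotentElem_mul he hf) s⁻¹
    rw [inv_inv] at h
    rwa [mul_inv_rev, inv_eq_self he, show s⁻¹ * e * (f * s) = s⁻¹ * (e * f) * s by
      simp only [mul_assoc]]

theorem compat_of_isIdempotentElem {e f : S} (he : IsIdempotentElem e)
    (hf : IsIdempotentElem f) : Compat e f :=
  compat_of_nle (nle_one_of_isIdempotentElem he) (nle_one_of_isIdempotentElem hf)

end InverseMonoid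

section Distributive

variable [DistributiveInverseMonoid S]

theorem le_bsup_left {a b : S} (h : Compat a b) : nle a (bsup a b) :=
  DistributiveInverseMonoid.le_sup_left a b h

theorem le_bsup_right {a b : S} (h : Compat a b) : nle b (bsup a b) :=
  DistributiveInverseMonoid.le_sup_right a b h

theorem bsup_nle {a b c : S} (h : Compat a b) (ha : nle a c) (hb : nle b c) :
    nle (bsup a b) c :=
  DistributiveInverseMonoid.sup_le a b c h ha hb

theorem mul_bsup {a b : S} (h : Compat a b) (c : S) : c * bsup a b = bsup (c * a) (c * b) :=
  DistributiveInverseMonoid.mul_sup a b c h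

theorem bsup_zero (a : S) : bsup a 0 = a :=
  have h := compat_of_nle (nle_refl a) (zero_nle a)
  nle_antisymm (bsup_nle h (nle_refl a) (zero_nle a)) (le_bsup_left h)

theorem zero_bsup (a : S) : bsup 0 a = a :=
  have h := compat_of_nle (zero_nle a) (nle_refl a)
  nle_antisymm (bsup_nle h (zero_nle a) (nle_refl a)) (le_bsup_right h)

theorem isIdempotentElem_bsup {e f : S} (he : IsIdempotentElem e) (hf : IsIdempotentElem f) :
    IsIdempotentElem (bsup e f) := by
  have h := compat_of_isIdempotentElem he hf
  rw [IsIdempotentElem, mul_bsup h, ← eq_mul_of_nle' he (le_bsup_left h),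
    ← eq_mul_of_nle' hf (le_bsup_right h)]

def listSup (l : List S) : S := l.foldr bsup 0

theorem listSup_nle {l : List S} {c : S} (h : ∀ x ∈ l, nle x c) : nle (listSup l) c := by
  induction l with
  | nil => exact zero_nle c
  | cons a t ih =>
    have ht : nle (listSup t) c := ih fun x hx => h x (List.mem_cons_of_mem a hx)
    have ha := h a List.mem_cons_self
    exact bsup_nle (compat_of_nle ha ht) ha ht

theorem le_listSup {l : List S} {u : S} (hu : ∀ x ∈ l, nle x u) {x : S} (hx : x ∈ l) :
    nle x (listSup l) := by
  induction l with
  | nil => exact absurd hx List.not_mem_nil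
  | cons a t ih =>
    have hu' : ∀ x ∈ t, nle x u := fun y hy => hu y (List.mem_cons_of_mem a hy)
    have h : Compat a (listSup t) := compat_of_nle (hu a List.mem_cons_self) (listSup_nle hu')
    rcases List.mem_cons.mp hx with rfl | hxt
    · exact le_bsup_left h
    · exact nle_trans (ih hu' hxt) (le_bsup_right h)

theorem mul_listSup {l : List S} {u : S} (hu : ∀ x ∈ l, nle x u) (c : S) :
    c * listSup l = listSup (l.map (c * ·)) := by
  induction l with
  | nil => exact mul_zero' c
  | cons a t ih =>
    have hu' : ∀ x ∈ t, nle x u := fun y hy => hu y (List.mem_cons_of_mem a hy)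
    have h : Compat a (listSup t) := compat_of_nle (hu a List.mem_cons_self) (listSup_nle hu')
    exact (mul_bsup h c).trans (congrArg (bsup (c * a)) (ih hu'))

end Distributive

section Boolean

variable [BooleanInverseMonoid S]

theorem isIdempotentElem_bcompl {e : S} (he : IsIdempotentElem e) :
    IsIdempotentElem (bcompl e) :=
  BooleanInverseMonoid.compl_idem e he

theorem mul_bcompl {e : S} (he : IsIdempotentElem e) : e * bcompl e = 0 :=
  BooleanInverseMonoid.mul_compl e he

theorem eq_bsup_mul_mul_bcompl (x : S) {e : S} (he : IsIdempotentElem e) :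
    x = bsup (x * e) (x * bcompl e) := by
  have h : bsup e (bcompl e) = 1 := BooleanInverseMonoid.sup_compl e he
  rw [← mul_bsup (compat_of_isIdempotentElem he (isIdempotentElem_bcompl he)), h, mul_one]

theorem nle_bcompl_of_mul_eq_zero {x e : S} (hx : IsIdempotentElem x) (he : IsIdempotentElem e)
    (h : x * e = 0) : nle x (bcompl e) :=
  ⟨x, hx, (eq_bsup_mul_mul_bcompl x he).trans (by rw [h, zero_bsup])⟩

theorem nle_of_mul_bcompl_eq_zero {x e : S} (hx : IsIdempotentElem x) (he : IsIdempotentElem e)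
    (h : x * bcompl e = 0) : nle x e :=
  ⟨x, hx, (eq_bsup_mul_mul_bcompl x he).trans (by rw [h, bsup_zero])⟩

theorem bcompl_nle_bcompl {e f : S} (he : IsIdempotentElem e) (hf : IsIdempotentElem f)
    (h : nle e f) : nle (bcompl f) (bcompl e) := by
  refine nle_bcompl_of_mul_eq_zero (isIdempotentElem_bcompl hf) he (eq_zero_of_nle_zero ?_)
  have h' := mul_nle_mul_left h (bcompl f)
  rwa [commute_of_isIdempotentElem (isIdempotentElem_bcompl hf) hf, mul_bcompl hf] at h'

end Boolean

end InverseMonoidWithZero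

open InverseMonoidWithZero

section Ultrafilter

variable {S : Type u} [BooleanInverseMeetMonoid S] {A : Set S}

theorem binf_le_left (a b : S) : nle (binf a b) a := BooleanInverseMeetMonoid.inf_le_left a b

theorem binf_le_right (a b : S) : nle (binf a b) b := BooleanInverseMeetMonoid.inf_le_right a b

theorem le_binf {a b c : S} (ha : nle c a) (hb : nle c b) : nle c (binf a b) :=
  BooleanInverseMeetMonoid.le_inf a b c ha hb

theorem IsMFilter.binf_mem (hA : IsMFilter A) {a b : S} (ha : a ∈ A) (hb : b ∈ A) :
    binf a b ∈ A :=
  hA.2.1 a ha b hb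

theorem IsMFilter.mem_of_nle (hA : IsMFilter A) {a b : S} (ha : a ∈ A) (h : nle a b) : b ∈ A :=
  hA.2.2 a ha b h

theorem isMFilter_sUnion {c : Set (Set S)} (hc : ∀ B ∈ c, IsMFilter B)
    (hchain : IsChain (· ⊆ ·) c) (hne : c.Nonempty) : IsMFilter (⋃₀ c) := by
  obtain ⟨B, hB⟩ := hne
  refine ⟨(hc B hB).1.imp fun a ha => ⟨B, hB, ha⟩, ?_, ?_⟩
  · rintro a ⟨Ba, hBa, ha⟩ b ⟨Bb, hBb, hb⟩
    rcases hchain.total hBa hBb with hab | hba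
    · exact ⟨Bb, hBb, (hc Bb hBb).binf_mem (hab ha) hb⟩
    · exact ⟨Ba, hBa, (hc Ba hBa).binf_mem ha (hba hb)⟩
  · rintro a ⟨Ba, hBa, ha⟩ b hab
    exact ⟨Ba, hBa, (hc Ba hBa).mem_of_nle ha hab⟩

theorem exists_isMUltrafilter_superset {F : Set S} (hF : IsMFilter F) (hF0 : (0 : S) ∉ F) :
    ∃ A, F ⊆ A ∧ IsMUltrafilter A := by
  let P : Set (Set S) := {B | IsMFilter B ∧ (0 : S) ∉ B ∧ F ⊆ B}
  have hP : ∀ c ⊆ P, IsChain (· ⊆ ·) c → c.Nonempty → ∃ ub ∈ P, ∀ B ∈ c, B ⊆ ub := by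
    intro c hcP hchain hne
    obtain ⟨B, hB⟩ := hne
    refine ⟨⋃₀ c, ⟨isMFilter_sUnion (fun B hB => (hcP hB).1) hchain ⟨B, hB⟩, ?_, ?_⟩,
      fun B hB => Set.subset_sUnion_of_mem hB⟩
    · rintro ⟨B', hB', h0⟩
      exact (hcP hB').2.1 h0
    · exact (hcP hB).2.2.trans (Set.subset_sUnion_of_mem hB)
  obtain ⟨A, hFA, hA⟩ := zorn_subset_nonempty P hP F ⟨hF, hF0, subset_rfl⟩
  exact ⟨A, hFA, hA.prop.1, hA.prop.2.1, fun B hB hB0 hAB =>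
    hAB.antisymm (hA.2 ⟨hB, hB0, hA.prop.2.2.trans hAB⟩ hAB)⟩

theorem IsMUltrafilter.exists_binf_eq_zero (hA : IsMUltrafilter A) {a : S} (ha : a ∉ A) :
    ∃ t ∈ A, binf t a = 0 := by
  by_contra! hne
  obtain ⟨s, hs⟩ := hA.1.1
  let B : Set S := {c | ∃ t ∈ A, nle (binf t a) c}
  have hB : IsMFilter B := by
    refine ⟨⟨a, s, hs, binf_le_right s a⟩, ?_, ?_⟩
    · rintro x ⟨t, ht, htx⟩ y ⟨t', ht', hty⟩
      refine ⟨binf t t', hA.1.binf_mem ht ht', le_binf ?_ ?_⟩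
      · exact nle_trans (le_binf (nle_trans (binf_le_left _ _) (binf_le_left _ _))
          (binf_le_right _ _)) htx
      · exact nle_trans (le_binf (nle_trans (binf_le_left _ _) (binf_le_right _ _))
          (binf_le_right _ _)) hty
    · rintro x ⟨t, ht, htx⟩ y hxy
      exact ⟨t, ht, nle_trans htx hxy⟩
  have hB0 : (0 : S) ∉ B := fun ⟨t, ht, ht0⟩ => hne t ht (eq_zero_of_nle_zero ht0)
  have hAB : A = B := hA.2.2 B hB hB0 fun t ht => ⟨t, ht, binf_le_left t a⟩
  exact ha (hAB ▸ ⟨s, hs, binf_le_right s a⟩)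

theorem IsMUltrafilter.mem_or_mem_of_bsup_mem (hA : IsMUltrafilter A) {a b : S}
    (hab : Compat a b) (h : bsup a b ∈ A) : a ∈ A ∨ b ∈ A := by
  by_contra! hno
  obtain ⟨ta, hta, hta0⟩ := hA.exists_binf_eq_zero hno.1
  obtain ⟨tb, htb, htb0⟩ := hA.exists_binf_eq_zero hno.2
  set t := binf (binf ta tb) (bsup a b)
  have htA : t ∈ A := hA.1.binf_mem (hA.1.binf_mem hta htb) h
  have hpiece : ∀ {u x : S}, binf u x = 0 → nle t u → nle x (bsup a b) → t * t⁻¹ * x = 0 := by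
    intro u x hux htu hx
    have hxt : nle (t * t⁻¹ * x) t := by
      have h' := mul_nle_mul_left hx (t * t⁻¹)
      rwa [← eq_mul_inv_mul_of_nle (binf_le_right _ _)] at h'
    exact eq_zero_of_nle_zero
      (hux ▸ le_binf (nle_trans hxt htu) ⟨_, isIdempotentElem_mul_inv t, rfl⟩)
  have ht0 : t = 0 :=
    calc t = t * t⁻¹ * bsup a b := eq_mul_inv_mul_of_nle (binf_le_right _ _)
      _ = bsup (t * t⁻¹ * a) (t * t⁻¹ * b) := mul_bsup hab _
      _ = 0 := by
        rw [hpiece hta0 (nle_trans (binf_le_left _ _) (binf_le_left _ _)) (le_bsup_left hab),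
          hpiece htb0 (nle_trans (binf_le_left _ _) (binf_le_right _ _)) (le_bsup_right hab),
          bsup_zero]
  exact hA.2.1 (ht0 ▸ htA)

theorem IsMUltrafilter.exists_mem_of_listSup_mem (hA : IsMUltrafilter A) {l : List S} {u : S}
    (hu : ∀ x ∈ l, nle x u) (h : listSup l ∈ A) : ∃ x ∈ l, x ∈ A := by
  induction l with
  | nil => exact absurd h hA.2.1
  | cons a t ih =>
    have hu' : ∀ x ∈ t, nle x u := fun y hy => hu y (List.mem_cons_of_mem a hy)
    rcases hA.mem_or_mem_of_bsup_mem
      (compat_of_nle (hu a List.mem_cons_self) (listSup_nle hu')) h with ha | ht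
    · exact ⟨a, List.mem_cons_self, ha⟩
    · obtain ⟨x, hx, hxA⟩ := ih hu' ht
      exact ⟨x, List.mem_cons_of_mem a hx, hxA⟩

end Ultrafilter

section PiecewiseFactorizable

variable {S : Type u} [BooleanInverseMeetMonoid S]

theorem IsMUltrafilter.exists_isUnit_mem (hPF : PiecewiseFactorizable S) {A : Set S}
    (hA : IsMUltrafilter A) : ∃ g ∈ A, IsUnit g := by
  obtain ⟨s, hs⟩ := hA.1.1
  obtain ⟨l, -, hunit, hle, hlub⟩ := hPF s
  obtain ⟨x, hxl, hxA⟩ :=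
    hA.exists_mem_of_listSup_mem hle (hA.1.mem_of_nle hs (hlub _ fun _ => le_listSup hle))
  obtain ⟨g, hg, hxg⟩ := hunit x hxl
  exact ⟨g, hA.1.mem_of_nle hxA hxg, hg⟩

def unitBoundedIdempotents (s : S) : Set S :=
  {e | IsIdempotentElem e ∧ ∃ g : S, IsUnit g ∧ nle (s * e) g}

-- `e` lies below the join of `m`, phrased through upper bounds so that no join is formed.
def unitCoveredIdempotents (s : S) : Set S :=
  {e | IsIdempotentElem e ∧ ∃ m : List S, m ≠ [] ∧ (∀ x ∈ m, x ∈ unitBoundedIdempotents s) ∧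
    ∀ c : S, (∀ x ∈ m, nle x c) → nle e c}

theorem unitBoundedIdempotents_subset (s : S) :
    unitBoundedIdempotents s ⊆ unitCoveredIdempotents s := fun e he =>
  ⟨he.1, [e], List.cons_ne_nil e [], by simpa using he, fun _ hc => hc e List.mem_cons_self⟩

theorem zero_mem_unitCoveredIdempotents (s : S) : (0 : S) ∈ unitCoveredIdempotents s :=
  unitBoundedIdempotents_subset s
    ⟨isIdempotentElem_zero, 1, isUnit_one, by rw [mul_zero']; exact zero_nle 1⟩

theorem bsup_mem_unitCoveredIdempotents {s e f : S} (he : e ∈ unitCoveredIdempotents s)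
    (hf : f ∈ unitCoveredIdempotents s) : bsup e f ∈ unitCoveredIdempotents s := by
  obtain ⟨he, m, hm, hmJ, hem⟩ := he
  obtain ⟨hf, n, -, hnJ, hfn⟩ := hf
  refine ⟨isIdempotentElem_bsup he hf, m ++ n, by simp [hm], ?_, fun c hc => ?_⟩
  · simpa only [List.mem_append, or_imp, forall_and] using ⟨hmJ, hnJ⟩
  · exact bsup_nle (compat_of_isIdempotentElem he hf)
      (hem c fun x hx => hc x (List.mem_append_left n hx))
      (hfn c fun x hx => hc x (List.mem_append_right m hx))

def complementFilter (s : S) : Set S :=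
  {t | ∃ e ∈ unitCoveredIdempotents s, nle (s * bcompl e) t}

theorem mem_complementFilter_self (s : S) : s ∈ complementFilter s :=
  ⟨0, zero_mem_unitCoveredIdempotents s,
    mul_nle_self (isIdempotentElem_bcompl isIdempotentElem_zero) s⟩

theorem isMFilter_complementFilter (s : S) : IsMFilter (complementFilter s) := by
  refine ⟨⟨s, mem_complementFilter_self s⟩, ?_, fun x ⟨e, he, hex⟩ y hxy => ⟨e, he, nle_trans hex hxy⟩⟩
  rintro x ⟨e, he, hex⟩ y ⟨f, hf, hfy⟩
  have hc := compat_of_isIdempotentElem he.1 hf.1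
  have hef := isIdempotentElem_bsup he.1 hf.1
  refine ⟨bsup e f, bsup_mem_unitCoveredIdempotents he hf, le_binf ?_ ?_⟩
  · exact nle_trans (mul_nle_mul_left (bcompl_nle_bcompl he.1 hef (le_bsup_left hc)) s) hex
  · exact nle_trans (mul_nle_mul_left (bcompl_nle_bcompl hf.1 hef (le_bsup_right hc)) s) hfy

theorem zero_notMem_complementFilter {s : S} (hs : s⁻¹ * s ∉ unitCoveredIdempotents s) :
    (0 : S) ∉ complementFilter s := by
  rintro ⟨e, ⟨he, m, hm, hmJ, hem⟩, hse⟩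
  have hse' : s⁻¹ * s * bcompl e = 0 := by rw [mul_assoc, eq_zero_of_nle_zero hse, mul_zero']
  have hle := nle_of_mul_bcompl_eq_zero (isIdempotentElem_inv_mul s) he hse'
  exact hs ⟨isIdempotentElem_inv_mul s, m, hm, hmJ, fun c hc => nle_trans hle (hem c hc)⟩

theorem inv_mul_self_mem_unitCoveredIdempotents
    (hU : ∀ A : Set S, IsMUltrafilter A → ∃ g ∈ A, IsUnit g) (s : S) :
    s⁻¹ * s ∈ unitCoveredIdempotents s := by
  by_contra hs
  obtain ⟨A, hFA, hA⟩ :=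
    exists_isMUltrafilter_superset (isMFilter_complementFilter s) (zero_notMem_complementFilter hs)
  obtain ⟨g, hgA, hg⟩ := hU A hA
  have hsA : s ∈ A := hFA (mem_complementFilter_self s)
  set t := binf g s
  have hts : t = s * (t⁻¹ * t) := eq_mul_inv_mul_right_of_nle (binf_le_right g s)
  have htJ : t⁻¹ * t ∈ unitBoundedIdempotents s :=
    ⟨isIdempotentElem_inv_mul t, g, hg, hts ▸ binf_le_left g s⟩
  have hcompl : s * bcompl (t⁻¹ * t) ∈ A := hFA ⟨_, unitBoundedIdempotents_subset s htJ, nle_refl _⟩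
  have h0 : binf t (s * bcompl (t⁻¹ * t)) = 0 :=
    eq_zero_of_nle_mul_of_nle_mul (isIdempotentElem_inv_mul t)
      (isIdempotentElem_bcompl (isIdempotentElem_inv_mul t))
      (mul_bcompl (isIdempotentElem_inv_mul t)) (by rw [← hts]; exact binf_le_left _ _)
      (binf_le_right _ _)
  exact hA.2.1 (h0 ▸ hA.1.binf_mem (hA.1.binf_mem hgA hsA) hcompl)

theorem piecewiseFactorizable_of_forall_isMUltrafilter
    (hU : ∀ A : Set S, IsMUltrafilter A → ∃ g ∈ A, IsUnit g) : PiecewiseFactorizable S := by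
  intro s
  obtain ⟨-, m, hm, hmJ, hcover⟩ := inv_mul_self_mem_unitCoveredIdempotents hU s
  have hm1 : ∀ x ∈ m, nle x 1 := fun x hx => nle_one_of_isIdempotentElem (hmJ x hx).1
  have hs : s = listSup (m.map (s * ·)) :=
    calc s = s * (s⁻¹ * s) := (mul_inv_mul_assoc s).symm
      _ = s * (s⁻¹ * s * listSup m) := by
        rw [← eq_mul_of_nle (isIdempotentElem_inv_mul s) (hcover _ fun _ => le_listSup hm1)]
      _ = s * listSup m := by rw [← mul_assoc, mul_inv_mul_assoc]
      _ = listSup (m.map (s * ·)) := mul_listSup hm1 s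
  refine ⟨m.map (s * ·), by simpa using hm, ?_, ?_, fun c hc => hs ▸ listSup_nle hc⟩
  · simp only [List.mem_map, forall_exists_index, and_imp, forall_apply_eq_imp_iff₂]
    exact fun x hx => (hmJ x hx).2
  · simp only [List.mem_map, forall_exists_index, and_imp, forall_apply_eq_imp_iff₂]
    exact fun x hx => mul_nle_self (hmJ x hx).1 s

end PiecewiseFactorizable

/-- A Boolean inverse ∧-monoid is piecewise factorizable iff
every ultrafilter of `S` contains a unit. -/
theorem statement10 (S : Type u) [BooleanInverseMeetMonoid S] :
    PiecewiseFactorizable S ↔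
      ∀ A : Set S, IsMUltrafilter A → ∃ g ∈ A, IsUnit g :=
  ⟨fun hPF _ hA => hA.exists_isUnit_mem hPF, piecewiseFactorizable_of_forall_isMUltrafilter⟩
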